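/- For the binary entropy function $H_b$, the bounds $4p(1-p) \leq H_b(p) \leq (4p(1-p))^{1/\ln 4}$ hold for all $p \in (0,1)$. -/

import Mathlib

open Real

/-- The binary entropy function (in bits). -/
noncomputable def Hb (p : ℝ) : ℝ :=
  -(p * Real.logb 2 p) - (1 - p) * Real.logb 2 (1 - p)

/-!
Write `h` for the binary entropy in nats, so `Hb = h / log 2`, and put `x = 1 - 2p`. Then
`log 2 - h(p) = ∑ x^(2m+2) / ((2m+1)(2m+2))`, a series with nonnegative coefficients summing to
`log 2` (the alternating harmonic series); bounding `x^(2m+2) ≤ x^2` termwise gives the lower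
bound. For the upper bound, `log (4p(1-p)) - log 4 · log Hb(p)` vanishes at `p = 1/2` and is
antitone on `(0, 1/2]`: its derivative is nonpositive because `log 2 · (1 - x²) artanh x - x h(p)`
expands in powers `x^(2m+3)` whose coefficients are nonpositive from the second one on and sum to
zero. The case `p > 1/2` follows by the symmetry `p ↦ 1 - p`.
-/

open Filter Topology Set

theorem hasSum_of_nonneg_of_tendsto_hasSum_pow {a : ℕ → ℝ} (ha : ∀ m, 0 ≤ a m) (k : ℕ → ℕ)
    {F : ℝ → ℝ} {L : ℝ} (hF : ∀ x ∈ Ioo (0 : ℝ) 1, HasSum (fun m ↦ a m * x ^ k m) (F x))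
    (hL : Tendsto F (𝓝[<] 1) (𝓝 L)) : HasSum a L := by
  have hIoo : ∀ᶠ x in 𝓝[<] (1 : ℝ), x ∈ Ioo (0 : ℝ) 1 := Ioo_mem_nhdsLT one_pos
  have hpartial (N : ℕ) : ∑ m ∈ Finset.range N, a m ≤ L := by
    have hcont : Continuous fun x : ℝ ↦ ∑ m ∈ Finset.range N, a m * x ^ k m := by fun_prop
    have hlim : Tendsto (fun x : ℝ ↦ ∑ m ∈ Finset.range N, a m * x ^ k m) (𝓝[<] 1)
        (𝓝 (∑ m ∈ Finset.range N, a m)) := by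
      simpa using (hcont.tendsto 1).mono_left nhdsWithin_le_nhds
    refine le_of_tendsto_of_tendsto hlim hL (hIoo.mono fun x hx ↦ ?_)
    exact sum_le_hasSum _ (fun m _ ↦ mul_nonneg (ha m) (pow_nonneg hx.1.le _)) (hF x hx)
  have hsum : Summable a := summable_of_sum_range_le ha hpartial
  suffices L ≤ ∑' m, a m from
    le_antisymm (Real.tsum_le_of_sum_range_le ha hpartial) this ▸ hsum.hasSum
  refine le_of_tendsto hL (hIoo.mono fun x hx ↦ hasSum_le (fun m ↦ ?_) (hF x hx) hsum.hasSum)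
  exact mul_le_of_le_one_right (ha m) (pow_le_one₀ hx.1.le hx.2.le)

theorem mul_pow_le_of_hasSum_mul_pow {c : ℕ → ℝ} {s S x : ℝ} (k : ℕ → ℕ) (hc : HasSum c s)
    (hc_nonpos : ∀ m ≠ 0, c m ≤ 0) (hk : ∀ m, k 0 ≤ k m) (hx₀ : 0 ≤ x) (hx₁ : x ≤ 1)
    (hS : HasSum (fun m ↦ c m * x ^ k m) S) : s * x ^ k 0 ≤ S := by
  refine hasSum_le (fun m ↦ ?_) (hc.mul_right _) hS
  rcases eq_or_ne m 0 with rfl | hm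
  · rfl
  · exact mul_le_mul_of_nonpos_left (pow_le_pow_of_le_one hx₀ hx₁ (hk m)) (hc_nonpos m hm)

theorem Hb_eq_binEntropy_div (p : ℝ) : Hb p = binEntropy p / log 2 := by
  simp only [Hb, binEntropy, logb, log_inv]
  ring

theorem Hb_pos {p : ℝ} (hp₀ : 0 < p) (hp₁ : p < 1) : 0 < Hb p := by
  rw [Hb_eq_binEntropy_div]
  exact div_pos (binEntropy_pos hp₀ hp₁) (log_pos one_lt_two)

theorem Hb_one_sub (p : ℝ) : Hb (1 - p) = Hb p := by
  rw [Hb_eq_binEntropy_div, Hb_eq_binEntropy_div, binEntropy_one_sub]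

theorem log_two_sub_binEntropy_eq {x : ℝ} (hx : |x| < 1) :
    log 2 - binEntropy ((1 - x) / 2) = ((1 - x) * log (1 - x) + (1 + x) * log (1 + x)) / 2 := by
  obtain ⟨h₁, h₂⟩ := abs_lt.1 hx
  rw [binEntropy, show 1 - (1 - x) / 2 = (1 + x) / 2 by ring, inv_div, inv_div,
    log_div two_ne_zero (by linarith), log_div two_ne_zero (by linarith)]
  ring

theorem hasSum_log_two_sub_binEntropy {x : ℝ} (hx : |x| < 1) :
    HasSum (fun m : ℕ ↦ 1 / ((2 * m + 1) * (2 * m + 2)) * x ^ (2 * m + 2))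
      (log 2 - binEntropy ((1 - x) / 2)) := by
  obtain ⟨h₁, h₂⟩ := abs_lt.1 hx
  have hx2 : |x ^ 2| < 1 := by rw [abs_pow]; exact pow_lt_one₀ (abs_nonneg x) hx two_ne_zero
  have h := ((hasSum_log_sub_log_of_abs_lt_one hx).mul_left (x / 2)).sub
    ((hasSum_pow_div_log_of_abs_lt_one hx2).mul_left (1 / 2))
  have hval : x / 2 * (log (1 + x) - log (1 - x)) - 1 / 2 * -log (1 - x ^ 2) =
      ((1 - x) * log (1 - x) + (1 + x) * log (1 + x)) / 2 := by
    rw [show 1 - x ^ 2 = (1 - x) * (1 + x) by ring, log_mul (by linarith) (by linarith)]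
    ring
  rw [log_two_sub_binEntropy_eq hx, ← hval]
  refine h.congr_fun fun n ↦ ?_
  rw [← pow_mul]
  field_simp
  ring

theorem hasSum_alternatingHarmonic_pairs :
    HasSum (fun m : ℕ ↦ 1 / ((2 * m + 1) * (2 * m + 2) : ℝ)) (log 2) := by
  refine hasSum_of_nonneg_of_tendsto_hasSum_pow (fun m ↦ by positivity) (fun m ↦ 2 * m + 2)
    (fun x hx ↦ hasSum_log_two_sub_binEntropy (abs_lt.2 ⟨by linarith [hx.1], hx.2⟩)) ?_
  have hcont : Continuous fun x : ℝ ↦ log 2 - binEntropy ((1 - x) / 2) := by fun_prop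
  simpa using (hcont.tendsto 1).mono_left nhdsWithin_le_nhds

theorem log_two_mul_le_binEntropy {p : ℝ} (hp₀ : 0 < p) (hp₁ : p < 1) :
    log 2 * (4 * p * (1 - p)) ≤ binEntropy p := by
  set x := 1 - 2 * p
  have hx : |x| < 1 := abs_lt.2 ⟨by linarith, by linarith⟩
  have hx2 : x ^ 2 ≤ 1 := (sq_le_one_iff_abs_le_one x).2 hx.le
  have h := hasSum_le (fun m ↦ ?_) (hasSum_log_two_sub_binEntropy hx)
    (hasSum_alternatingHarmonic_pairs.mul_right (x ^ 2))
  · rw [show (1 - x) / 2 = p by ring] at h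
    linarith
  · refine mul_le_mul_of_nonneg_left ?_ (by positivity)
    rw [pow_add, pow_mul]
    exact mul_le_of_le_one_left (sq_nonneg x) (pow_le_one₀ (sq_nonneg x) hx2)

theorem four_mul_mul_one_sub_le_Hb {p : ℝ} (hp₀ : 0 < p) (hp₁ : p < 1) :
    4 * p * (1 - p) ≤ Hb p := by
  rw [Hb_eq_binEntropy_div, le_div_iff₀ (log_pos one_lt_two), mul_comm]
  exact log_two_mul_le_binEntropy hp₀ hp₁

theorem hasSum_one_div_odd_mul_next_odd :
    HasSum (fun m : ℕ ↦ 1 / ((2 * m + 1) * (2 * m + 3) : ℝ)) (1 / 2) := by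
  have hpartial (N : ℕ) : ∑ m ∈ Finset.range N, 1 / ((2 * m + 1) * (2 * m + 3) : ℝ) =
      1 / 2 - 1 / (2 * (2 * N + 1)) := by
    induction N with
    | zero => norm_num
    | succ N ih =>
      rw [Finset.sum_range_succ, ih]
      push_cast
      field_simp
      ring
  rw [hasSum_iff_tendsto_nat_of_nonneg (fun m ↦ by positivity), funext hpartial]
  have hlin : Tendsto (fun N : ℕ ↦ 2 * (2 * (N : ℝ) + 1)) atTop atTop :=
    tendsto_atTop_mono (fun N ↦ by linarith [N.cast_nonneg (α := ℝ)]) tendsto_natCast_atTop_atTop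
  simpa using (tendsto_const_nhds (x := (1 / 2 : ℝ))).sub
    ((tendsto_const_nhds (x := (1 : ℝ))).div_atTop hlin)

noncomputable def keyCoeff (m : ℕ) : ℝ :=
  1 / ((2 * m + 1) * (2 * m + 2)) - 2 * log 2 * (1 / ((2 * m + 1) * (2 * m + 3)))

theorem hasSum_keyCoeff : HasSum keyCoeff 0 := by
  have h := hasSum_alternatingHarmonic_pairs.sub
    (hasSum_one_div_odd_mul_next_odd.mul_left (2 * log 2))
  rwa [show log 2 - 2 * log 2 * (1 / 2) = 0 by ring] at h

theorem keyCoeff_nonpos {m : ℕ} (hm : m ≠ 0) : keyCoeff m ≤ 0 := by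
  have hm' : (1 : ℝ) ≤ m := Nat.one_le_cast.2 (Nat.one_le_iff_ne_zero.2 hm)
  have h : (2 * m + 3 : ℝ) ≤ 2 * log 2 * (2 * m + 2) := by nlinarith [log_two_gt_d9]
  rw [keyCoeff, sub_nonpos, mul_one_div, div_le_div_iff₀ (by positivity) (by positivity)]
  nlinarith

theorem hasSum_keyCoeff_mul_pow {x : ℝ} (hx : |x| < 1) :
    HasSum (fun m ↦ keyCoeff m * x ^ (2 * m + 3))
      (log 2 * ((1 - x ^ 2) / 2) * (log (1 + x) - log (1 - x)) -
        x * binEntropy ((1 - x) / 2)) := by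
  set L := log (1 + x) - log (1 - x)
  have hodd : HasSum (fun k : ℕ ↦ x ^ (2 * k + 1) / (2 * k + 1)) (L / 2) :=
    ((hasSum_log_sub_log_of_abs_lt_one hx).div_const 2).congr_fun fun k ↦ by ring
  have hodd_tail : HasSum (fun k : ℕ ↦ x ^ (2 * k + 3) / (2 * k + 3)) (L / 2 - x) := by
    have h := (hasSum_nat_add_iff' 1).mpr hodd
    simp only [Finset.sum_range_one, CharP.cast_eq_zero, mul_zero, zero_add, pow_one, div_one]
      at h
    refine h.congr_fun fun k ↦ ?_
    push_cast
    ring_nf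
  have hb : HasSum (fun k : ℕ ↦ 1 / ((2 * k + 1) * (2 * k + 3)) * x ^ (2 * k + 3))
      ((x ^ 2 * (L / 2) - (L / 2 - x)) / 2) := by
    refine (((hodd.mul_left (x ^ 2)).sub hodd_tail).div_const 2).congr_fun fun k ↦ ?_
    field_simp
    ring
  have h := ((hasSum_log_two_sub_binEntropy hx).mul_left x).sub (hb.mul_left (2 * log 2))
  have hval : x * (log 2 - binEntropy ((1 - x) / 2)) -
      2 * log 2 * ((x ^ 2 * (L / 2) - (L / 2 - x)) / 2) =
      log 2 * ((1 - x ^ 2) / 2) * L - x * binEntropy ((1 - x) / 2) := by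
    ring
  rw [← hval]
  refine h.congr_fun fun m ↦ ?_
  unfold keyCoeff
  ring

theorem one_sub_two_mul_mul_binEntropy_le {p : ℝ} (hp₀ : 0 < p) (hp : p ≤ 1 / 2) :
    (1 - 2 * p) * binEntropy p ≤ 2 * log 2 * (p * (1 - p)) * (log (1 - p) - log p) := by
  have hx : |1 - 2 * p| < 1 := abs_lt.2 ⟨by linarith, by linarith⟩
  have h := mul_pow_le_of_hasSum_mul_pow (fun m ↦ 2 * m + 3) hasSum_keyCoeff
    (fun m hm ↦ keyCoeff_nonpos hm) (fun m ↦ by omega) (by linarith) (by linarith)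
    (hasSum_keyCoeff_mul_pow hx)
  rw [show (1 - (1 - 2 * p)) / 2 = p by ring, show 1 + (1 - 2 * p) = 2 * (1 - p) by ring,
    show 1 - (1 - 2 * p) = 2 * p by ring, log_mul two_ne_zero (by linarith),
    log_mul two_ne_zero hp₀.ne'] at h
  linarith

noncomputable def upperGap (p : ℝ) : ℝ := log (4 * p * (1 - p)) - log 4 * log (Hb p)

theorem upperGap_half : upperGap (1 / 2) = 0 := by
  rw [upperGap, Hb_eq_binEntropy_div, one_div, binEntropy_two_inv,
    div_self (log_pos one_lt_two).ne']
  norm_num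

theorem hasDerivAt_upperGap {p : ℝ} (hp₀ : 0 < p) (hp₁ : p < 1) :
    HasDerivAt upperGap
      ((1 - 2 * p) / (p * (1 - p)) - log 4 * (log (1 - p) - log p) / binEntropy p) p := by
  have hq : HasDerivAt (fun y ↦ 4 * y * (1 - y)) (4 - 8 * p) p := by
    refine (((hasDerivAt_id p).const_mul 4).mul ((hasDerivAt_id p).const_sub 1)).congr_deriv ?_
    simp only [id]
    ring
  have hHb : HasDerivAt Hb ((log (1 - p) - log p) / log 2) p := by
    rw [funext Hb_eq_binEntropy_div]
    exact (hasDerivAt_binEntropy hp₀.ne' hp₁.ne).div_const _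
  have h := (hq.log (by nlinarith)).sub ((hHb.log (Hb_pos hp₀ hp₁).ne').const_mul (log 4))
  refine (show HasDerivAt upperGap _ p from h).congr_deriv ?_
  rw [Hb_eq_binEntropy_div]
  have := (binEntropy_pos hp₀ hp₁).ne'
  have := (log_pos one_lt_two).ne'
  have : 1 - p ≠ 0 := by linarith
  field_simp
  ring

theorem upperGap_antitoneOn : AntitoneOn upperGap (Ioc 0 (1 / 2)) := by
  have hderiv (p : ℝ) (hp : p ∈ Ioc (0 : ℝ) (1 / 2)) :=
    hasDerivAt_upperGap hp.1 (by linarith [hp.2])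
  refine antitoneOn_of_hasDerivWithinAt_nonpos (convex_Ioc 0 (1 / 2)) (f' := fun p ↦
      (1 - 2 * p) / (p * (1 - p)) - log 4 * (log (1 - p) - log p) / binEntropy p)
    (fun p hp ↦ (hderiv p hp).continuousAt.continuousWithinAt) (fun p hp ↦ ?_) (fun p hp ↦ ?_)
  all_goals rw [interior_Ioc] at hp
  · exact (hderiv p (Ioo_subset_Ioc_self hp)).hasDerivWithinAt
  · obtain ⟨hp₀, hp⟩ := hp
    have hpq : 0 < p * (1 - p) := by nlinarith
    rw [sub_nonpos, div_le_div_iff₀ hpq (binEntropy_pos hp₀ (by linarith)), log_four_eq]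
    linarith [one_sub_two_mul_mul_binEntropy_le hp₀ hp.le]

theorem Hb_le_rpow_of_le_half {p : ℝ} (hp₀ : 0 < p) (hp : p ≤ 1 / 2) :
    Hb p ≤ (4 * p * (1 - p)) ^ ((1 : ℝ) / log 4) := by
  have hgap : 0 ≤ upperGap p := by
    have h := upperGap_antitoneOn ⟨hp₀, hp⟩ ⟨by norm_num, le_rfl⟩ hp
    rwa [upperGap_half] at h
  rw [upperGap, sub_nonneg] at hgap
  rw [rpow_def_of_pos (by nlinarith), ← exp_log (Hb_pos hp₀ (by linarith)), exp_le_exp,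
    mul_one_div, le_div_iff₀ (log_pos (by norm_num)), mul_comm]
  exact hgap

/-- Bounds on the binary entropy: `4p(1-p) ≤ H_b(p) ≤ (4p(1-p))^(1/ln 4)` for `p ∈ (0,1)`. -/
theorem binary_entropy_bounds (p : ℝ) (hp0 : 0 < p) (hp1 : p < 1) :
    4 * p * (1 - p) ≤ Hb p ∧ Hb p ≤ (4 * p * (1 - p)) ^ ((1 : ℝ) / Real.log 4) := by
  refine ⟨four_mul_mul_one_sub_le_Hb hp0 hp1, ?_⟩
  rcases le_total p (1 / 2) with hp | hp
  · exact Hb_le_rpow_of_le_half hp0 hp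
  · have h := Hb_le_rpow_of_le_half (p := 1 - p) (by linarith) (by linarith)
    rwa [Hb_one_sub, show 4 * (1 - p) * (1 - (1 - p)) = 4 * p * (1 - p) by ring] at h
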